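/- Let ρ be a smooth L-periodic solution of ∂_t ρ + (u·∇)ρ = (1/Fr) w on [0,T] × T³, where u = (u_h, w) is smooth and divergence-free, w is independent of z, and ‖w(t)‖_{L^∞} ≤ M e^{t/Fr} with M := ‖w(0)‖_{L^∞(T²)} + ‖⟨ρ(0)⟩_z‖_{L^∞(T²)}. Then for all t ∈ [0,T], ‖ρ(t)‖_{L^∞(T³)} ≤ ‖ρ(0)‖_{L^∞(T³)} + M e^{t/Fr}. -/

import Mathlib

open MeasureTheory Set Metric

/-- `f` is `L`-periodic in each coordinate direction. -/
def PeriodicFn (L : ℝ) {n : ℕ} {α : Type*} (f : (Fin n → ℝ) → α) : Prop :=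
  ∀ (x : Fin n → ℝ) (i : Fin n), f (Function.update x i (x i + L)) = f x

/-- The measure of the `L`-periodic box `[0,L]ⁿ`, modelling the torus `Tⁿ`. -/
noncomputable def torusMeasure (L : ℝ) (n : ℕ) : Measure (Fin n → ℝ) :=
  volume.restrict (Set.univ.pi fun _ => Set.Icc 0 L)

/-- The measure of the periodic box `[0,L]² × [0,L]`, modelling `T³ = T² × [0,L]`. -/
noncomputable def torusMeasure3 (L : ℝ) : Measure ((Fin 2 → ℝ) × ℝ) :=
  (torusMeasure L 2).prod (volume.restrict (Set.Icc 0 L))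

def box2 (L : ℝ) : Set (Fin 2 → ℝ) := Set.univ.pi fun _ => Set.Icc 0 L
def box3 (L : ℝ) : Set ((Fin 2 → ℝ) × ℝ) := box2 L ×ˢ Set.Icc 0 L

lemma box2_compact (L : ℝ) : IsCompact (box2 L) :=
  isCompact_univ_pi fun _ => isCompact_Icc

lemma box3_compact (L : ℝ) : IsCompact (box3 L) :=
  (box2_compact L).prod isCompact_Icc

lemma box3_nonempty {L : ℝ} (hL : 0 < L) : ((fun _ => 0, 0) : (Fin 2 → ℝ) × ℝ) ∈ box3 L :=
  ⟨fun i _ => ⟨le_refl 0, hL.le⟩, le_refl 0, hL.le⟩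

lemma vol1 {L : ℝ} (hL : 0 < L) {x : ℝ} (hx : x ∈ Icc 0 L) {r : ℝ} (hr : 0 < r) :
    volume (ball x r ∩ Icc 0 L) ≠ 0 := by
  set s := min (r / 2) (L / 2) with hs
  have hspos : 0 < s := lt_min (by linarith) (by linarith)
  have hsr : s ≤ r / 2 := min_le_left _ _
  have hsL : s ≤ L / 2 := min_le_right _ _
  set a := max 0 (x - s) with ha
  set b := min L (x + s) with hb
  have hab : a < b := by
    rcases le_or_gt x (L / 2) with h | h
    · have hb' : b = x + s := min_eq_right (by linarith)
      have ha' : a ≤ x := max_le hx.1 (by linarith)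
      linarith
    · have ha' : a = x - s := max_eq_right (by linarith)
      have hb' : x ≤ b := le_min hx.2 (by linarith)
      linarith
  have hsub : Icc a b ⊆ ball x r ∩ Icc 0 L := by
    intro y hy
    constructor
    · rw [mem_ball, Real.dist_eq, abs_lt]
      have h1 : y ≤ x + s := hy.2.trans (min_le_right _ _)
      have h2 : x - s ≤ y := (le_max_right 0 (x - s)).trans hy.1
      constructor <;> linarith
    · exact ⟨(le_max_left 0 (x - s)).trans hy.1, hy.2.trans (min_le_left _ _)⟩
  intro h0
  have := measure_mono (μ := volume) hsub
  rw [h0, le_zero_iff, Real.volume_Icc, ENNReal.ofReal_eq_zero] at this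
  linarith

lemma vol2 {L : ℝ} (hL : 0 < L) {x : Fin 2 → ℝ} (hx : x ∈ box2 L) {r : ℝ} (hr : 0 < r) :
    volume (ball x r ∩ box2 L) ≠ 0 := by
  rw [ball_pi x hr]
  rw [box2, ← Set.pi_inter_distrib, volume_pi_pi]
  rw [Finset.prod_ne_zero_iff]
  intro i _
  exact vol1 hL (hx i (Set.mem_univ i)) hr

lemma open2 {L : ℝ} (hL : 0 < L) {x : Fin 2 → ℝ} (hx : x ∈ box2 L) {U : Set (Fin 2 → ℝ)}
    (hU : IsOpen U) (hxU : x ∈ U) : torusMeasure L 2 U ≠ 0 := by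
  obtain ⟨r, hr, hball⟩ := Metric.isOpen_iff.mp hU x hxU
  rw [torusMeasure, Measure.restrict_apply hU.measurableSet]
  intro h0
  exact vol2 hL hx hr (measure_mono_null (Set.inter_subset_inter_left _ hball) h0)

lemma open3 {L : ℝ} (hL : 0 < L) {x : (Fin 2 → ℝ) × ℝ} (hx : x ∈ box3 L)
    {U : Set ((Fin 2 → ℝ) × ℝ)} (hU : IsOpen U) (hxU : x ∈ U) : torusMeasure3 L U ≠ 0 := by
  obtain ⟨r, hr, hball⟩ := Metric.isOpen_iff.mp hU x hxU
  have hprod : ball x.1 r ×ˢ ball x.2 r ⊆ U := by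
    rw [ball_prod_same]
    simpa using hball
  intro h0
  have h1 : torusMeasure3 L (ball x.1 r ×ˢ ball x.2 r) = 0 :=
    measure_mono_null hprod h0
  rw [torusMeasure3, Measure.prod_prod] at h1
  rcases mul_eq_zero.mp h1 with h | h
  · rw [torusMeasure, Measure.restrict_apply isOpen_ball.measurableSet] at h
    exact vol2 hL hx.1 hr (measure_mono_null (by exact fun y hy => hy) h)
  · rw [Measure.restrict_apply isOpen_ball.measurableSet] at h
    exact vol1 hL hx.2 hr (measure_mono_null (fun y hy => hy) h)

lemma pt_le {α : Type*} [MeasurableSpace α] [TopologicalSpace α] [OpensMeasurableSpace α]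
    {μ : Measure α} {f : α → ℝ} (hf : Continuous f) {x : α}
    (hx : ∀ U : Set α, IsOpen U → x ∈ U → μ U ≠ 0) :
    ENNReal.ofReal |f x| ≤ eLpNorm f ⊤ μ := by
  by_contra hcon
  push_neg at hcon
  have hfin : eLpNorm f ⊤ μ ≠ ⊤ := hcon.trans ENNReal.ofReal_lt_top |>.ne
  set c := (eLpNorm f ⊤ μ).toReal with hc
  have hclt : c < |f x| := (ENNReal.lt_ofReal_iff_toReal_lt hfin).mp hcon
  set b := (c + |f x|) / 2 with hbdef
  have hcb : c < b := by rw [hbdef]; linarith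
  have hbfx : b < |f x| := by rw [hbdef]; linarith
  set U := {y | b < |f y|} with hU
  have hUopen : IsOpen U := isOpen_lt continuous_const (continuous_abs.comp hf)
  have hxU : x ∈ U := hbfx
  have hae : ∀ᵐ y ∂μ, |f y| ≤ c := by
    filter_upwards [ae_le_eLpNormEssSup (f := f) (μ := μ)] with y hy
    have h1 : (‖f y‖₊ : ENNReal) ≤ eLpNorm f ⊤ μ := by rwa [eLpNorm_exponent_top]
    have h2 := ENNReal.toReal_mono hfin h1
    simpa [Real.norm_eq_abs, hc] using h2
  have hnull : μ U = 0 := by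
    have := hae
    rw [MeasureTheory.ae_iff] at this
    refine measure_mono_null ?_ this
    intro y hy
    simp only [Set.mem_setOf_eq, not_le]
    exact hcb.trans hy
  exact hx U hUopen hxU hnull

lemma up3 {L C : ℝ} (hL : 0 < L) {f : ((Fin 2 → ℝ) × ℝ) → ℝ}
    (h : ∀ x ∈ box3 L, |f x| ≤ C) : eLpNorm f ⊤ (torusMeasure3 L) ≤ ENNReal.ofReal C := by
  rw [eLpNorm_exponent_top]
  apply eLpNormEssSup_le_of_ae_bound (C := C)
  have hnull : torusMeasure3 L (box3 L)ᶜ = 0 := by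
    have hsub : (box3 L)ᶜ ⊆ ((box2 L)ᶜ ×ˢ Set.univ) ∪ (Set.univ ×ˢ (Icc (0:ℝ) L)ᶜ) := by
      intro p hp
      by_cases h1 : p.1 ∈ box2 L
      · right
        refine ⟨Set.mem_univ _, fun h2 => hp ⟨h1, h2⟩⟩
      · exact Or.inl ⟨h1, Set.mem_univ _⟩
    refine measure_mono_null hsub (measure_union_null ?_ ?_)
    · rw [torusMeasure3, Measure.prod_prod]
      have : torusMeasure L 2 (box2 L)ᶜ = 0 := by
        rw [torusMeasure, Measure.restrict_apply ((box2_compact L).isClosed.measurableSet.compl)]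
        rw [show (Set.univ.pi fun _ : Fin 2 => Icc (0:ℝ) L) = box2 L from rfl,
          Set.compl_inter_self, measure_empty]
      rw [this, zero_mul]
    · rw [torusMeasure3, Measure.prod_prod]
      have : (volume.restrict (Icc (0:ℝ) L)) (Icc (0:ℝ) L)ᶜ = 0 := by
        rw [Measure.restrict_apply measurableSet_Icc.compl, Set.compl_inter_self, measure_empty]
      rw [this, mul_zero]
  have hmem : ∀ᵐ p ∂(torusMeasure3 L), p ∈ box3 L := by
    rw [MeasureTheory.ae_iff]
    exact hnull
  filter_upwards [hmem] with p hp
  rw [Real.norm_eq_abs]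
  exact h p hp

lemma reduce (hL : 0 < L) (g : ((Fin 2 → ℝ) × ℝ) → ℝ)
    (hh : ∀ (p : (Fin 2 → ℝ) × ℝ) (i : Fin 2),
      g (Function.update p.1 i (p.1 i + L), p.2) = g p)
    (hv : ∀ p : (Fin 2 → ℝ) × ℝ, g (p.1, p.2 + L) = g p) :
    ∀ y, ∃ x ∈ box3 L, g y = g x := by
  intro y
  have pv : Function.Periodic (fun z => g (y.1, z)) L := fun z => hv (y.1, z)
  obtain ⟨z', hz', hzeq⟩ := pv.exists_mem_Ico₀ hL y.2
  have p0 : Function.Periodic (fun s => g (Function.update y.1 0 s, z')) L := by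
    intro s
    have h := hh (Function.update y.1 0 s, z') 0
    simpa [Function.update_idem] using h
  obtain ⟨s0, hs0, h0eq⟩ := p0.exists_mem_Ico₀ hL (y.1 0)
  set x0 := Function.update y.1 0 s0 with hx0
  have p1 : Function.Periodic (fun s => g (Function.update x0 1 s, z')) L := by
    intro s
    have h := hh (Function.update x0 1 s, z') 1
    simpa [Function.update_idem] using h
  obtain ⟨s1, hs1, h1eq⟩ := p1.exists_mem_Ico₀ hL (x0 1)
  set x1 := Function.update x0 1 s1 with hx1
  refine ⟨(x1, z'), ⟨?_, ?_⟩, ?_⟩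
  · intro i _
    have h20 : (0 : Fin 2) ≠ 1 := by decide
    show x1 i ∈ Icc (0:ℝ) L
    have hi : i = 0 ∨ i = 1 := by omega
    rcases hi with hi | hi
    · have hx10 : x1 0 = s0 := by
        rw [hx1, Function.update_of_ne h20, hx0, Function.update_self]
      rw [hi, hx10]
      exact ⟨hs0.1, hs0.2.le⟩
    · have hx11 : x1 1 = s1 := by rw [hx1, Function.update_self]
      rw [hi, hx11]
      exact ⟨hs1.1, hs1.2.le⟩
  · exact ⟨hz'.1, hz'.2.le⟩
  · have e1 : g y = g (y.1, z') := by
      have := hzeq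
      simpa using this
    have e2 : g (y.1, z') = g (x0, z') := by
      have := h0eq
      simpa [Function.update_eq_self] using this
    have e3 : g (x0, z') = g (x1, z') := by
      have := h1eq
      simpa [Function.update_eq_self] using this
    rw [e1, e2, e3]

lemma key (L T Fr M R0 : ℝ) (hL : 0 < L) (hFr : 0 < Fr) (hM : 0 ≤ M)
    (u : ℝ → (Fin 2 → ℝ) → (Fin 2 → ℝ)) (w : ℝ → (Fin 2 → ℝ) → ℝ)
    (f : ℝ → (Fin 2 → ℝ) → ℝ)
    (ρ : ℝ → ((Fin 2 → ℝ) × ℝ) → ℝ)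
    (hρ : ContDiff ℝ (⊤ : ℕ∞) fun p : ℝ × ((Fin 2 → ℝ) × ℝ) => ρ p.1 p.2)
    (hρph : ∀ t (p : (Fin 2 → ℝ) × ℝ) (i : Fin 2),
      ρ t (Function.update p.1 i (p.1 i + L), p.2) = ρ t p)
    (hρpv : ∀ t (p : (Fin 2 → ℝ) × ℝ), ρ t (p.1, p.2 + L) = ρ t p)
    (heq : ∀ t (p : (Fin 2 → ℝ) × ℝ),
      deriv (fun s => ρ s p) t + fderiv ℝ (ρ t) p (u t p.1, 0)
          + w t p.1 * fderiv ℝ (ρ t) p (0, 1) = f t p.1)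
    (hf : ∀ t ∈ Set.Icc (0:ℝ) T, ∀ xh ∈ box2 L,
      f t xh ≤ (1 / Fr) * (M * Real.exp (t / Fr)))
    (h0 : ∀ x ∈ box3 L, ρ 0 x ≤ R0) :
    ∀ t ∈ Set.Icc (0:ℝ) T, ∀ x ∈ box3 L, ρ t x ≤ R0 + M * Real.exp (t / Fr) := by
  have hρc : Continuous fun p : ℝ × ((Fin 2 → ℝ) × ℝ) => ρ p.1 p.2 := hρ.continuous
  have main : ∀ ε > 0, ∀ t ∈ Set.Icc (0:ℝ) T, ∀ x ∈ box3 L,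
      ρ t x < R0 + ε + (M + ε) * Real.exp (t / Fr) := by
    intro ε hε
    by_contra hcon
    push_neg at hcon
    obtain ⟨t₁, ht₁, x₁, hx₁, hge⟩ := hcon
    set φ : ℝ → ℝ := fun s => R0 + ε + (M + ε) * Real.exp (s / Fr) with hφdef
    have hφc : Continuous φ := by
      apply continuous_const.add
      exact continuous_const.mul (Real.continuous_exp.comp (continuous_id.div_const Fr))
    set K : Set (ℝ × ((Fin 2 → ℝ) × ℝ)) :=
      (Set.Icc 0 T ×ˢ box3 L) ∩ {p | φ p.1 ≤ ρ p.1 p.2} with hKdef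
    have hKc : IsCompact K :=
      (isCompact_Icc.prod (box3_compact L)).inter_right
        (isClosed_le (hφc.comp continuous_fst) hρc)
    set S := Prod.fst '' K with hSdef
    have hSc : IsCompact S := hKc.image continuous_fst
    have hSne : S.Nonempty := ⟨t₁, ⟨(t₁, x₁), ⟨⟨ht₁, hx₁⟩, hge⟩, rfl⟩⟩
    set t0 := sInf S with ht0def
    have ht0S : t0 ∈ S := hSc.sInf_mem hSne
    obtain ⟨p₀, hp₀K, hp₀⟩ := ht0S
    have ht0T : t0 ∈ Set.Icc 0 T := hp₀ ▸ hp₀K.1.1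
    have hbx : p₀.2 ∈ box3 L := hp₀K.1.2
    have h00 : φ t0 ≤ ρ t0 p₀.2 := by
      have h := hp₀K.2
      simp only [Set.mem_setOf_eq] at h
      rwa [hp₀] at h
    have before : ∀ s, 0 ≤ s → s < t0 → ∀ y ∈ box3 L, ρ s y < φ s := by
      intro s hs0 hst y hy
      by_contra hge2
      push_neg at hge2
      have hsS : s ∈ S := ⟨(s, y), ⟨⟨⟨hs0, hst.le.trans ht0T.2⟩, hy⟩, hge2⟩, rfl⟩
      exact absurd (csInf_le hSc.bddBelow hsS) (not_le.mpr hst)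
    have t0pos : 0 < t0 := by
      rcases eq_or_lt_of_le ht0T.1 with h | h
      · exfalso
        have h1 : ρ 0 p₀.2 ≤ R0 := h0 p₀.2 hbx
        have h2 : φ 0 ≤ ρ 0 p₀.2 := by rwa [← h] at h00
        have h3 : φ 0 = R0 + ε + (M + ε) := by
          simp [hφdef, Real.exp_zero]
        linarith
      · exact h
    obtain ⟨xs, hxsb, hxsmax⟩ := (box3_compact L).exists_isMaxOn ⟨_, box3_nonempty hL⟩
      ((hρc.comp (Continuous.prodMk_right t0)).continuousOn)
    have hmax' : ∀ y, ρ t0 y ≤ ρ t0 xs := by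
      intro y
      obtain ⟨x', hx', hxe⟩ := reduce hL (ρ t0) (hρph t0) (hρpv t0) y
      rw [hxe]
      exact hxsmax hx'
    have hlm : IsLocalMax (ρ t0) xs := Filter.Eventually.of_forall hmax'
    have hfd0 : fderiv ℝ (ρ t0) xs = 0 := IsLocalMax.fderiv_eq_zero hlm
    have hφt0 : φ t0 ≤ ρ t0 xs := h00.trans (hxsmax hbx)
    have hgdiff : Differentiable ℝ (fun s => ρ s xs) := by
      have : (fun s => ρ s xs)
          = (fun p : ℝ × ((Fin 2 → ℝ) × ℝ) => ρ p.1 p.2) ∘ (fun s => (s, xs)) := rfl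
      rw [this]
      exact (hρ.differentiable (by simp)).comp (differentiable_id.prodMk (differentiable_const _))
    have hgd : HasDerivAt (fun s => ρ s xs) (deriv (fun s => ρ s xs) t0) t0 :=
      (hgdiff t0).hasDerivAt
    have hφd : HasDerivAt φ ((M + ε) * (Real.exp (t0 / Fr) * (1 / Fr))) t0 := by
      have h1 : HasDerivAt (fun s : ℝ => s / Fr) (1 / Fr) t0 := by
        simpa using (hasDerivAt_id t0).div_const Fr
      have h2 := (Real.hasDerivAt_exp (t0 / Fr)).comp t0 h1
      exact (h2.const_mul (M + ε)).const_add (R0 + ε)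
    set D := deriv (fun s => ρ s xs) t0 with hD
    have hHd : HasDerivAt (fun s => ρ s xs - φ s)
        (D - (M + ε) * (Real.exp (t0 / Fr) * (1 / Fr))) t0 := hgd.sub hφd
    have hslope : Filter.Tendsto (slope (fun s => ρ s xs - φ s) t0) (nhdsWithin t0 (Set.Iio t0))
        (nhds (D - (M + ε) * (Real.exp (t0 / Fr) * (1 / Fr)))) := by
      refine (hasDerivAt_iff_tendsto_slope.mp hHd).mono_left (nhdsWithin_mono _ ?_)
      intro y hy
      exact ne_of_lt hy
    have hnonneg : ∀ᶠ s in nhdsWithin t0 (Set.Iio t0),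
        0 ≤ slope (fun s => ρ s xs - φ s) t0 s := by
      filter_upwards [Ioo_mem_nhdsLT_of_mem (⟨t0pos, le_refl t0⟩ : t0 ∈ Set.Ioc 0 t0)]
        with s hs
      obtain ⟨hs1, hs2⟩ := hs
      have hHs : ρ s xs - φ s < 0 := sub_neg.mpr (before s hs1.le hs2 xs hxsb)
      have hHt0 : 0 ≤ ρ t0 xs - φ t0 := sub_nonneg.mpr hφt0
      rw [slope_def_field]
      exact le_of_lt (div_pos_of_neg_of_neg (by linarith) (by linarith))
    have hge0 : 0 ≤ D - (M + ε) * (Real.exp (t0 / Fr) * (1 / Fr)) :=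
      ge_of_tendsto hslope hnonneg
    have hpde := heq t0 xs
    rw [hfd0] at hpde
    simp only [ContinuousLinearMap.zero_apply, add_zero, mul_zero] at hpde
    have hDle : D ≤ (1 / Fr) * (M * Real.exp (t0 / Fr)) := by
      rw [hD, hpde]
      exact hf t0 ht0T xs.1 hxsb.1
    have hepos := Real.exp_pos (t0 / Fr)
    have hfr : 0 < 1 / Fr := one_div_pos.mpr hFr
    nlinarith [mul_pos (mul_pos hε hepos) hfr]
  intro t ht x hx
  by_contra hlt
  push_neg at hlt
  have he : 0 < Real.exp (t / Fr) := Real.exp_pos _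
  set e := Real.exp (t / Fr) with hedef
  set ε := (ρ t x - (R0 + M * e)) / (1 + e) with hεdef
  have h1e : (0:ℝ) < 1 + e := by linarith
  have hεpos : 0 < ε := div_pos (by linarith) h1e
  have hmain := main ε hεpos t ht x hx
  have hεe : ε * (1 + e) = ρ t x - (R0 + M * e) := div_mul_cancel₀ _ (ne_of_gt h1e)
  nlinarith [hmain, hεe]


/-- `L^∞` bound for the density. If `∂ₜρ + (u·∇)ρ = (1/Fr)w` with
`u = (u_h, w)` divergence-free, `w` independent of `z`, and
`‖w(t)‖_{L^∞} ≤ M e^{t/Fr}` where `M = ‖w(0)‖_{L^∞} + ‖⟨ρ(0)⟩_z‖_{L^∞}`, then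
`‖ρ(t)‖_{L^∞(T³)} ≤ ‖ρ(0)‖_{L^∞(T³)} + M e^{t/Fr}`. -/
theorem stmt6 (L T Fr M : ℝ) (hL : 0 < L) (hT : 0 < T) (hFr : 0 < Fr)
    (u : ℝ → (Fin 2 → ℝ) → (Fin 2 → ℝ)) (w : ℝ → (Fin 2 → ℝ) → ℝ)
    (ρ : ℝ → ((Fin 2 → ℝ) × ℝ) → ℝ)
    (hu : ContDiff ℝ (⊤ : ℕ∞) fun p : ℝ × (Fin 2 → ℝ) => u p.1 p.2)
    (hw : ContDiff ℝ (⊤ : ℕ∞) fun p : ℝ × (Fin 2 → ℝ) => w p.1 p.2)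
    (hρ : ContDiff ℝ (⊤ : ℕ∞) fun p : ℝ × ((Fin 2 → ℝ) × ℝ) => ρ p.1 p.2)
    (hup : ∀ t, PeriodicFn L (u t)) (hwp : ∀ t, PeriodicFn L (w t))
    (hρph : ∀ t (p : (Fin 2 → ℝ) × ℝ) (i : Fin 2),
      ρ t (Function.update p.1 i (p.1 i + L), p.2) = ρ t p)
    (hρpv : ∀ t (p : (Fin 2 → ℝ) × ℝ), ρ t (p.1, p.2 + L) = ρ t p)
    (hdiv : ∀ t x, ∑ i, fderiv ℝ (fun y => u t y i) x (Pi.single i 1) = 0)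
    (heq : ∀ t (p : (Fin 2 → ℝ) × ℝ),
      deriv (fun s => ρ s p) t + fderiv ℝ (ρ t) p (u t p.1, 0)
          + w t p.1 * fderiv ℝ (ρ t) p (0, 1)
        = (1 / Fr) * w t p.1)
    (hM : M = (eLpNorm (w 0) ⊤ (torusMeasure L 2)).toReal
        + (eLpNorm (fun xh => (1 / L) * ∫ z in (0 : ℝ)..L, ρ 0 (xh, z)) ⊤
            (torusMeasure L 2)).toReal)
    (hwb : ∀ t ∈ Set.Icc (0 : ℝ) T,
      eLpNorm (w t) ⊤ (torusMeasure L 2) ≤ ENNReal.ofReal (M * Real.exp (t / Fr))) :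
    ∀ t ∈ Set.Icc (0 : ℝ) T,
      eLpNorm (ρ t) ⊤ (torusMeasure3 L)
        ≤ ENNReal.ofReal ((eLpNorm (ρ 0) ⊤ (torusMeasure3 L)).toReal
            + M * Real.exp (t / Fr)) := by
  have hM0 : 0 ≤ M := by rw [hM]; positivity
  have hρc : Continuous fun p : ℝ × ((Fin 2 → ℝ) × ℝ) => ρ p.1 p.2 := hρ.continuous
  have hwc : ∀ t, Continuous (w t) := fun t =>
    hw.continuous.comp (Continuous.prodMk_right t)
  have hρ0c : Continuous (ρ 0) := hρc.comp (Continuous.prodMk_right 0)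
  -- pointwise bound on w
  have hwpt : ∀ t ∈ Set.Icc (0:ℝ) T, ∀ xh ∈ box2 L, |w t xh| ≤ M * Real.exp (t / Fr) := by
    intro t ht xh hxh
    have h1 : ENNReal.ofReal |w t xh| ≤ eLpNorm (w t) ⊤ (torusMeasure L 2) :=
      pt_le (hwc t) (fun U hU hxU => open2 hL hxh hU hxU)
    have h2 := h1.trans (hwb t ht)
    exact (ENNReal.ofReal_le_ofReal_iff (by positivity)).mp h2
  -- R0
  set R0 := (eLpNorm (ρ 0) ⊤ (torusMeasure3 L)).toReal with hR0
  have hfin : eLpNorm (ρ 0) ⊤ (torusMeasure3 L) ≠ ⊤ := by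
    obtain ⟨C, hC⟩ := (box3_compact L).exists_bound_of_continuousOn hρ0c.continuousOn
    have := up3 hL (f := ρ 0) (C := C) (fun x hx => by
      rw [← Real.norm_eq_abs]; exact hC x hx)
    exact (this.trans_lt ENNReal.ofReal_lt_top).ne
  have hρ0pt : ∀ x ∈ box3 L, |ρ 0 x| ≤ R0 := by
    intro x hx
    have h1 : ENNReal.ofReal |ρ 0 x| ≤ eLpNorm (ρ 0) ⊤ (torusMeasure3 L) :=
      pt_le hρ0c (fun U hU hxU => open3 hL hx hU hxU)
    have h2 := ENNReal.toReal_mono hfin h1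
    rwa [ENNReal.toReal_ofReal (abs_nonneg _)] at h2
  -- upper bound
  have hupper := key L T Fr M R0 hL hFr hM0 u w (fun t xh => (1 / Fr) * w t xh) ρ hρ
    hρph hρpv heq
    (by
      intro t ht xh hxh
      have h1 : w t xh ≤ M * Real.exp (t / Fr) := (le_abs_self _).trans (hwpt t ht xh hxh)
      exact mul_le_mul_of_nonneg_left h1 (by positivity))
    (fun x hx => (le_abs_self _).trans (hρ0pt x hx))
  -- lower bound (apply key to -ρ)
  have hlower := key L T Fr M R0 hL hFr hM0 u w (fun t xh => -((1 / Fr) * w t xh))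
    (fun t p => -(ρ t p)) hρ.neg
    (fun t p i => by simp only [neg_inj]; exact hρph t p i)
    (fun t p => by simp only [neg_inj]; exact hρpv t p)
    (by
      intro t p
      have h := heq t p
      have e1 : deriv (fun s => -(ρ s p)) t = -deriv (fun s => ρ s p) t := deriv.neg
      have e2 : fderiv ℝ (fun y => -(ρ t y)) p = -fderiv ℝ (ρ t) p := fderiv_neg
      rw [e1, e2]
      simp only [ContinuousLinearMap.neg_apply]
      linarith)
    (by
      intro t ht xh hxh
      have h1 : -w t xh ≤ M * Real.exp (t / Fr) := (neg_le_abs _).trans (hwpt t ht xh hxh)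
      show -((1 / Fr) * w t xh) ≤ (1 / Fr) * (M * Real.exp (t / Fr))
      have h2 : -((1 / Fr) * w t xh) = (1 / Fr) * (-w t xh) := by ring
      rw [h2]
      exact mul_le_mul_of_nonneg_left h1 (by positivity))
    (fun x hx => (neg_le_abs _).trans (hρ0pt x hx))
  -- conclude
  intro t ht
  apply up3 hL
  intro x hx
  rw [abs_le]
  constructor
  · have := hlower t ht x hx
    linarith
  · exact hupper t ht x hx
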